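/- arXiv:1904.06515 — 2 statements merged into one kernel-verified Lean document; each statement's English description precedes it below -/
import Mathlib

section
/- Let (G,⋄,e,Φ) be a regular Hom-group. Define a new product on G by a · b := Φ⁻¹(a ⋄ b) for all a,b ∈ G. Then (G,·,e) is a group: the product · is associative, e is a two-sided identity for ·, and the Hom-inverse a⁻¹ of each a ∈ G is a two-sided inverse for ·. -/
/-! The twist `Φ` is multiplicative, hence so is `Φ⁻¹`, and `Φ` fixes the Hom-unit.
Substituting `Φ⁻¹ a, Φ⁻¹ b, Φ⁻¹ c` into Hom-associativity and applying `Φ⁻¹` to both sides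
gives associativity of `a · b = Φ⁻¹ (a ⋄ b)`; the unit and inverse laws become the Hom-unit
and Hom-inverse laws after cancelling `Φ⁻¹ ∘ Φ`, resp. using `Φ⁻¹ e = e`. -/

namespace HomGroup

variable {G : Type*} {op : G → G → G} {Φ : G ≃ G}

theorem symm_map_op (hmul : ∀ x y, Φ (op x y) = op (Φ x) (Φ y)) (x y : G) :
    Φ.symm (op x y) = op (Φ.symm x) (Φ.symm y) :=
  Φ.symm_apply_eq.mpr <| by rw [hmul, Φ.apply_symm_apply, Φ.apply_symm_apply]

/-- Both sides equal `e ⋄ Φ e`, computed once with `e` as a left unit and once with `Φ⁻¹ e ⋄ e`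
pulled out of `Φ`. -/
theorem map_unit {e : G} (hmul : ∀ x y, Φ (op x y) = op (Φ x) (Φ y))
    (hunit : ∀ x, op x e = Φ x ∧ op e x = Φ x) : Φ e = e := by
  apply Φ.injective
  calc Φ (Φ e) = op e (Φ e) := ((hunit _).2).symm
    _ = op (Φ (Φ.symm e)) (Φ e) := by rw [Φ.apply_symm_apply]
    _ = Φ (Φ (Φ.symm e)) := by rw [← hmul, (hunit _).1]
    _ = Φ e := by rw [Φ.apply_symm_apply]

theorem symm_unit {e : G} (hmul : ∀ x y, Φ (op x y) = op (Φ x) (Φ y))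
    (hunit : ∀ x, op x e = Φ x ∧ op e x = Φ x) : Φ.symm e = e :=
  Φ.symm_apply_eq.mpr (map_unit hmul hunit).symm

theorem untwist_assoc (hmul : ∀ x y, Φ (op x y) = op (Φ x) (Φ y))
    (hassoc : ∀ x y z, op (Φ x) (op y z) = op (op x y) (Φ z)) (a b c : G) :
    Φ.symm (op (Φ.symm (op a b)) c) = Φ.symm (op a (Φ.symm (op b c))) := by
  have h := hassoc (Φ.symm a) (Φ.symm b) (Φ.symm c)
  rw [Φ.apply_symm_apply, Φ.apply_symm_apply] at h
  rw [symm_map_op hmul a b, symm_map_op hmul b c, h]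

end HomGroup

theorem stmt10_general {G : Type*} (op : G → G → G) (Φ : G ≃ G) (e : G) (inv : G → G)
    (hmulΦ : ∀ x y : G, Φ (op x y) = op (Φ x) (Φ y))
    (hassoc : ∀ x y z : G, op (Φ x) (op y z) = op (op x y) (Φ z))
    (hunit : ∀ x : G, op x e = Φ x ∧ op e x = Φ x)
    (hinv : ∀ x : G, op x (inv x) = e ∧ op (inv x) x = e) :
    (∀ a b c : G,
      Φ.symm (op (Φ.symm (op a b)) c) = Φ.symm (op a (Φ.symm (op b c)))) ∧
    (∀ a : G, Φ.symm (op a e) = a ∧ Φ.symm (op e a) = a) ∧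
    (∀ a : G, Φ.symm (op a (inv a)) = e ∧ Φ.symm (op (inv a) a) = e) := by
  have hΦe := HomGroup.symm_unit hmulΦ hunit
  refine ⟨HomGroup.untwist_assoc hmulΦ hassoc, fun a => ?_, fun a => ?_⟩
  · simp only [hunit a, Φ.symm_apply_apply, and_self]
  · simp only [hinv a, hΦe, and_self]

/-- If `(G,⋄,e,Φ)` is a regular Hom-group, then
`a · b := Φ⁻¹(a ⋄ b)` makes `(G,·,e)` a group: `·` is associative, `e` is a
two-sided identity and the Hom-inverse is a two-sided inverse for `·`. -/
theorem stmt10 {G : Type*} (op : G → G → G) (Φ : G ≃ G) (e : G) (inv : G → G)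
    (hmulΦ : ∀ x y : G, Φ (op x y) = op (Φ x) (Φ y))
    (hassoc : ∀ x y z : G, op (Φ x) (op y z) = op (op x y) (Φ z))
    (hunit : ∀ x : G, op x e = Φ x ∧ op e x = Φ x)
    (huniq : ∀ e' : G, (∀ x : G, op x e' = Φ x ∧ op e' x = Φ x) → e' = e)
    (hinv : ∀ x : G, op x (inv x) = e ∧ op (inv x) x = e) :
    (∀ a b c : G,
      Φ.symm (op (Φ.symm (op a b)) c) = Φ.symm (op a (Φ.symm (op b c)))) ∧
    (∀ a : G, Φ.symm (op a e) = a ∧ Φ.symm (op e a) = a) ∧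
    (∀ a : G, Φ.symm (op a (inv a)) = e ∧ Φ.symm (op (inv a) a) = e) :=
  stmt10_general op Φ e inv hmulΦ hassoc hunit hinv
end

section
/- Let (g,[·,·],φ) be a regular Hom-Lie algebra. If D, D₁, D₂ are derivations of (g,[·,·],φ), then Ad_φ(D) := φ∘D∘φ⁻¹ and [D₁,D₂]_φ := φ∘D₁∘φ⁻¹∘D₂∘φ⁻¹ − φ∘D₂∘φ⁻¹∘D₁∘φ⁻¹ are again derivations of (g,[·,·],φ). Hence (Der(g), [·,·]_φ, Ad_φ) is a Hom-Lie subalgebra of the regular Hom-Lie algebra (gl(g), [·,·]_φ, Ad_φ). -/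
/-- A derivation of a regular Hom-Lie algebra `(g, b, φ)`:
`D[x,y] = [φ(x), (φ⁻¹∘D∘φ)(y)] + [(φ⁻¹∘D∘φ)(x), φ(y)]`. -/
def IsHomLieDer {g : Type*} [AddCommGroup g] [Module ℝ g]
    (b : g →ₗ[ℝ] g →ₗ[ℝ] g) (φ : g ≃ₗ[ℝ] g) (D : g →ₗ[ℝ] g) : Prop :=
  ∀ x y : g, D (b x y) = b (φ x) (φ.symm (D (φ y))) + b (φ.symm (D (φ x))) (φ y)

/-- `Ad_φ(D) := φ∘D∘φ⁻¹`. -/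
def adPhi {g : Type*} [AddCommGroup g] [Module ℝ g]
    (φ : g ≃ₗ[ℝ] g) (D : g →ₗ[ℝ] g) : g →ₗ[ℝ] g :=
  φ.toLinearMap ∘ₗ D ∘ₗ φ.symm.toLinearMap

/-- `[D₁,D₂]_φ := φ∘D₁∘φ⁻¹∘D₂∘φ⁻¹ − φ∘D₂∘φ⁻¹∘D₁∘φ⁻¹`. -/
def brPhi {g : Type*} [AddCommGroup g] [Module ℝ g]
    (φ : g ≃ₗ[ℝ] g) (D₁ D₂ : g →ₗ[ℝ] g) : g →ₗ[ℝ] g :=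
  φ.toLinearMap ∘ₗ D₁ ∘ₗ φ.symm.toLinearMap ∘ₗ D₂ ∘ₗ φ.symm.toLinearMap
    - φ.toLinearMap ∘ₗ D₂ ∘ₗ φ.symm.toLinearMap ∘ₗ D₁ ∘ₗ φ.symm.toLinearMap

/-! For multiplicative `φ`, `D` is a derivation exactly when `Ad_φ(D)[x,y] = [φx, Dy] + [Dx, φy]`,
and `Ad_φ(D)` satisfies that identity because `D` does.
The φ-bracket is `Ad_φ(D₁∘φ⁻¹∘D₂ − D₂∘φ⁻¹∘D₁)`; expanding it on `[x,y]` by the same identity,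
the mixed terms `[D₁x, D₂y] + [D₂x, D₁y]` are symmetric in `D₁, D₂` and cancel. -/

section

variable {g : Type*} [AddCommGroup g] [Module ℝ g] (b : g →ₗ[ℝ] g →ₗ[ℝ] g) (φ : g ≃ₗ[ℝ] g)

theorem LinearEquiv.symm_map_bracket (hmul : ∀ x y : g, φ (b x y) = b (φ x) (φ y)) (x y : g) :
    φ.symm (b x y) = b (φ.symm x) (φ.symm y) :=
  φ.injective (by rw [hmul]; simp)

variable {b φ}

theorem isHomLieDer_adPhi_iff (E : g →ₗ[ℝ] g) :
    IsHomLieDer b φ (adPhi φ E) ↔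
      ∀ x y : g, adPhi φ E (b x y) = b (φ x) (E y) + b (E x) (φ y) := by
  simp [IsHomLieDer, adPhi]

theorem brPhi_eq_adPhi (D₁ D₂ : g →ₗ[ℝ] g) :
    brPhi φ D₁ D₂ =
      adPhi φ (D₁ ∘ₗ φ.symm.toLinearMap ∘ₗ D₂ - D₂ ∘ₗ φ.symm.toLinearMap ∘ₗ D₁) := by
  ext x
  simp [brPhi, adPhi]

theorem adPhi_sub (A B : g →ₗ[ℝ] g) : adPhi φ (A - B) = adPhi φ A - adPhi φ B := by
  ext x
  simp [adPhi]

namespace IsHomLieDer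

variable {D : g →ₗ[ℝ] g}

theorem adPhi_apply_bracket (hD : IsHomLieDer b φ D)
    (hmul : ∀ x y : g, φ (b x y) = b (φ x) (φ y)) (x y : g) :
    adPhi φ D (b x y) = b (φ x) (D y) + b (D x) (φ y) := by
  simp only [_root_.adPhi, LinearMap.comp_apply, LinearEquiv.coe_coe]
  rw [φ.symm_map_bracket b hmul, hD]
  simp [hmul]

theorem apply_symm_bracket (hD : IsHomLieDer b φ D)
    (hmul : ∀ x y : g, φ (b x y) = b (φ x) (φ y)) (x y : g) :
    D (φ.symm (b x y)) = b x (φ.symm (D y)) + b (φ.symm (D x)) y := by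
  rw [φ.symm_map_bracket b hmul, hD]
  simp

theorem adPhi (hD : IsHomLieDer b φ D)
    (hmul : ∀ x y : g, φ (b x y) = b (φ x) (φ y)) :
    IsHomLieDer b φ (adPhi φ D) :=
  (isHomLieDer_adPhi_iff D).mpr (hD.adPhi_apply_bracket hmul)

theorem adPhi_comp_symm_comp_apply_bracket (hD : IsHomLieDer b φ D) {D' : g →ₗ[ℝ] g}
    (hD' : IsHomLieDer b φ D') (hmul : ∀ x y : g, φ (b x y) = b (φ x) (φ y)) (x y : g) :
    _root_.adPhi φ (D ∘ₗ φ.symm.toLinearMap ∘ₗ D') (b x y) =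
      b (φ x) (D (φ.symm (D' y))) + b (D x) (D' y) +
        (b (D' x) (D y) + b (D (φ.symm (D' x))) (φ y)) := by
  have h := hD.adPhi_apply_bracket hmul
  simp only [_root_.adPhi, LinearMap.comp_apply, LinearEquiv.coe_coe] at h ⊢
  rw [hD'.apply_symm_bracket hmul, map_add, map_add, map_add, h, h, φ.apply_symm_apply,
    φ.apply_symm_apply]

theorem brPhi {D₁ D₂ : g →ₗ[ℝ] g} (hD₁ : IsHomLieDer b φ D₁) (hD₂ : IsHomLieDer b φ D₂)
    (hmul : ∀ x y : g, φ (b x y) = b (φ x) (φ y)) :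
    IsHomLieDer b φ (brPhi φ D₁ D₂) := by
  rw [brPhi_eq_adPhi, isHomLieDer_adPhi_iff]
  intro x y
  rw [adPhi_sub, LinearMap.sub_apply, hD₁.adPhi_comp_symm_comp_apply_bracket hD₂ hmul,
    hD₂.adPhi_comp_symm_comp_apply_bracket hD₁ hmul]
  simp only [LinearMap.sub_apply, LinearMap.comp_apply, LinearEquiv.coe_coe, map_sub]
  abel

end IsHomLieDer

end

theorem stmt15_general {g : Type*} [AddCommGroup g] [Module ℝ g]
    (b : g →ₗ[ℝ] g →ₗ[ℝ] g) (φ : g ≃ₗ[ℝ] g)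
    (hmul : ∀ x y : g, φ (b x y) = b (φ x) (φ y))
    (D D₁ D₂ : g →ₗ[ℝ] g)
    (hD : IsHomLieDer b φ D) (hD₁ : IsHomLieDer b φ D₁)
    (hD₂ : IsHomLieDer b φ D₂) :
    IsHomLieDer b φ (adPhi φ D) ∧ IsHomLieDer b φ (brPhi φ D₁ D₂) :=
  ⟨hD.adPhi hmul, hD₁.brPhi hD₂ hmul⟩

/-- If `D, D₁, D₂` are derivations of a regular Hom-Lie algebra
`(g, b, φ)`, then `Ad_φ(D)` and `[D₁,D₂]_φ` are again derivations; hence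
`(Der(g), [·,·]_φ, Ad_φ)` is a Hom-Lie subalgebra of `(gl(g), [·,·]_φ, Ad_φ)`. -/
theorem stmt15 {g : Type*} [AddCommGroup g] [Module ℝ g]
    (b : g →ₗ[ℝ] g →ₗ[ℝ] g) (φ : g ≃ₗ[ℝ] g)
    (hskew : ∀ x y : g, b x y = - b y x)
    (hmul : ∀ x y : g, φ (b x y) = b (φ x) (φ y))
    (hjac : ∀ x y z : g,
      b (φ x) (b y z) + b (φ y) (b z x) + b (φ z) (b x y) = 0)
    (D D₁ D₂ : g →ₗ[ℝ] g)
    (hD : IsHomLieDer b φ D) (hD₁ : IsHomLieDer b φ D₁)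
    (hD₂ : IsHomLieDer b φ D₂) :
    IsHomLieDer b φ (adPhi φ D) ∧ IsHomLieDer b φ (brPhi φ D₁ D₂) :=
  stmt15_general b φ hmul D D₁ D₂ hD hD₁ hD₂
end
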